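/- arXiv:1302.3519 — 5 statements merged into one kernel-verified Lean document; each statement's English description precedes it below -/
import Mathlib

section
/- Let (S,∨,∧) be a set with two binary operations. Then S satisfies the skew lattice axioms together with left-handedness (x∧y∧x = x∧y and x∨y∨x = y∨x) and both middle-distributivity identities (x∧(y∨z)∧x = (x∧y∧x)∨(x∧z∧x) and x∨(y∧z)∨x = (x∨y∨x)∧(x∨z∨x)) if and only if S satisfies: associativity of ∧ and ∨, the absorption laws (y∧x)∨x = x and x∧(x∨y) = x, the identities (x∧y)∨x = x and x∧(y∨x) = x, and the distributivity identities x∧(y∨z) = (x∧y)∨(x∧z) and (x∧y)∨z = (x∨z)∧(y∨z). -/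
/-!
Under left-handedness, `x∧y∧x = x∧y` and `x∨y∨x = y∨x`, the two middle-distributive laws
collapse to the one-sided distributive laws `x∧(y∨z) = (x∧y)∨(x∧z)` and
`(x∧y)∨z = (x∨z)∧(y∨z)`. Given associativity and the absorption laws `(y∧x)∨x = x`,
`x∧(x∨y) = x`, left-handedness is in turn equivalent to the pair `(x∧y)∨x = x`,
`x∧(y∨x) = x`. The two remaining skew lattice absorption laws are recovered from
distributivity once both operations are known to be idempotent.
-/

/-- The skew lattice axioms for two binary operations `mt` (∧) and `jn` (∨):
associativity of both operations, and the four absorption laws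
(y∧x)∨x = x, x∧(x∨y) = x, (y∨x)∧x = x, x∨(x∧y) = x. -/
def SkewLatticeAxioms {S : Type*} (mt jn : S → S → S) : Prop :=
  (∀ x y z : S, mt x (mt y z) = mt (mt x y) z) ∧
  (∀ x y z : S, jn x (jn y z) = jn (jn x y) z) ∧
  (∀ x y : S, jn (mt y x) x = x) ∧
  (∀ x y : S, mt x (jn x y) = x) ∧
  (∀ x y : S, mt (jn y x) x = x) ∧
  (∀ x y : S, jn x (mt x y) = x)

section Identities

variable {S : Type*} {mt jn : S → S → S}

theorem jn_mt_self_of_mt_mt_self (jn_mt_absorb : ∀ x y : S, jn (mt y x) x = x)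
    (mt_mt_self : ∀ x y : S, mt (mt x y) x = mt x y) (x y : S) :
    jn (mt x y) x = x := by
  simpa only [mt_mt_self] using jn_mt_absorb x (mt x y)

theorem mt_jn_self_of_jn_jn_self (jn_assoc : ∀ x y z : S, jn x (jn y z) = jn (jn x y) z)
    (mt_jn_absorb : ∀ x y : S, mt x (jn x y) = x)
    (jn_jn_self : ∀ x y : S, jn (jn x y) x = jn y x) (x y : S) :
    mt x (jn y x) = x := by
  calc mt x (jn y x) = mt x (jn x (jn y x)) := by rw [jn_assoc, jn_jn_self]
    _ = x := mt_jn_absorb x (jn y x)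

theorem mt_mt_self_of_jn_mt_self (mt_jn_absorb : ∀ x y : S, mt x (jn x y) = x)
    (jn_mt_self : ∀ x y : S, jn (mt x y) x = x) (x y : S) :
    mt (mt x y) x = mt x y := by
  simpa only [jn_mt_self] using mt_jn_absorb (mt x y) x

theorem jn_jn_self_of_mt_jn_self (jn_assoc : ∀ x y z : S, jn x (jn y z) = jn (jn x y) z)
    (jn_mt_absorb : ∀ x y : S, jn (mt y x) x = x)
    (mt_jn_self : ∀ x y : S, mt x (jn y x) = x) (x y : S) :
    jn (jn x y) x = jn y x := by
  simpa only [← jn_assoc, mt_jn_self] using jn_mt_absorb (jn y x) x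

theorem mt_middle_distrib_iff (mt_mt_self : ∀ x y : S, mt (mt x y) x = mt x y) (x y z : S) :
    mt (mt x (jn y z)) x = jn (mt (mt x y) x) (mt (mt x z) x) ↔
      mt x (jn y z) = jn (mt x y) (mt x z) := by
  rw [mt_mt_self, mt_mt_self, mt_mt_self]

theorem jn_middle_distrib_iff (jn_jn_self : ∀ x y : S, jn (jn x y) x = jn y x) (x y z : S) :
    jn (jn x (mt y z)) x = mt (jn (jn x y) x) (jn (jn x z) x) ↔
      jn (mt y z) x = mt (jn y x) (jn z x) := by
  rw [jn_jn_self, jn_jn_self, jn_jn_self]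

theorem mt_idem (jn_mt_self : ∀ x y : S, jn (mt x y) x = x)
    (mt_jn_self : ∀ x y : S, mt x (jn y x) = x) (x : S) :
    mt x x = x := by
  simpa only [jn_mt_self] using mt_jn_self x (mt x x)

theorem jn_idem (mt_jn_absorb : ∀ x y : S, mt x (jn x y) = x)
    (jn_mt_self : ∀ x y : S, jn (mt x y) x = x) (x : S) :
    jn x x = x := by
  simpa only [mt_jn_absorb] using jn_mt_self x (jn x x)

theorem mt_jn_absorb_of_jn_distrib (jn_mt_absorb : ∀ x y : S, jn (mt y x) x = x)
    (jn_idem : ∀ x : S, jn x x = x)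
    (jn_distrib : ∀ x y z : S, jn (mt x y) z = mt (jn x z) (jn y z)) (x y : S) :
    mt (jn y x) x = x := by
  simpa only [jn_mt_absorb, jn_idem] using (jn_distrib y x x).symm

theorem jn_mt_absorb_of_mt_distrib (mt_jn_absorb : ∀ x y : S, mt x (jn x y) = x)
    (mt_idem : ∀ x : S, mt x x = x)
    (mt_distrib : ∀ x y z : S, mt x (jn y z) = jn (mt x y) (mt x z)) (x y : S) :
    jn x (mt x y) = x := by
  simpa only [mt_jn_absorb, mt_idem] using (mt_distrib x x y).symm

end Identities

/-- The skew lattice axioms together with left-handedness (`x∧y∧x = x∧y`, `x∨y∨x = y∨x`)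
and both middle-distributivity identities hold iff: associativity of ∧ and ∨,
the absorption laws (y∧x)∨x = x and x∧(x∨y) = x, the identities (x∧y)∨x = x and
x∧(y∨x) = x, and the distributivity identities x∧(y∨z) = (x∧y)∨(x∧z) and
(x∧y)∨z = (x∨z)∧(y∨z) all hold. -/
theorem left_handed_distributive_characterization
    {S : Type*} (mt jn : S → S → S) :
    (SkewLatticeAxioms mt jn ∧
      (∀ x y : S, mt (mt x y) x = mt x y) ∧
      (∀ x y : S, jn (jn x y) x = jn y x) ∧
      (∀ x y z : S, mt (mt x (jn y z)) x = jn (mt (mt x y) x) (mt (mt x z) x)) ∧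
      (∀ x y z : S, jn (jn x (mt y z)) x = mt (jn (jn x y) x) (jn (jn x z) x))) ↔
    ((∀ x y z : S, mt x (mt y z) = mt (mt x y) z) ∧
      (∀ x y z : S, jn x (jn y z) = jn (jn x y) z) ∧
      (∀ x y : S, jn (mt y x) x = x) ∧
      (∀ x y : S, mt x (jn x y) = x) ∧
      (∀ x y : S, jn (mt x y) x = x) ∧
      (∀ x y : S, mt x (jn y x) = x) ∧
      (∀ x y z : S, mt x (jn y z) = jn (mt x y) (mt x z)) ∧
      (∀ x y z : S, jn (mt x y) z = mt (jn x z) (jn y z))) := by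
  constructor
  · rintro ⟨⟨mt_assoc, jn_assoc, jn_mt_absorb, mt_jn_absorb, -, -⟩, mt_mt_self, jn_jn_self,
      mt_middle, jn_middle⟩
    exact ⟨mt_assoc, jn_assoc, jn_mt_absorb, mt_jn_absorb,
      jn_mt_self_of_mt_mt_self jn_mt_absorb mt_mt_self,
      mt_jn_self_of_jn_jn_self jn_assoc mt_jn_absorb jn_jn_self,
      fun x y z => (mt_middle_distrib_iff mt_mt_self x y z).1 (mt_middle x y z),
      fun x y z => (jn_middle_distrib_iff jn_jn_self z x y).1 (jn_middle z x y)⟩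
  · rintro ⟨mt_assoc, jn_assoc, jn_mt_absorb, mt_jn_absorb, jn_mt_self, mt_jn_self,
      mt_distrib, jn_distrib⟩
    have mt_mt_self := mt_mt_self_of_jn_mt_self mt_jn_absorb jn_mt_self
    have jn_jn_self := jn_jn_self_of_mt_jn_self jn_assoc jn_mt_absorb mt_jn_self
    refine ⟨⟨mt_assoc, jn_assoc, jn_mt_absorb, mt_jn_absorb,
      mt_jn_absorb_of_jn_distrib jn_mt_absorb (jn_idem mt_jn_absorb jn_mt_self) jn_distrib,
      jn_mt_absorb_of_mt_distrib mt_jn_absorb (mt_idem jn_mt_self mt_jn_self) mt_distrib⟩,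
      mt_mt_self, jn_jn_self, fun x y z => ?_, fun x y z => ?_⟩
    · exact (mt_middle_distrib_iff mt_mt_self x y z).2 (mt_distrib x y z)
    · exact (jn_middle_distrib_iff jn_jn_self x y z).2 (jn_distrib y z x)
end

section
/- In a skew lattice S: (a) an element x belongs to the center (i.e., x∧y = y∧x and x∨y = y∨x for all y) if and only if the D-class of x is a singleton (i.e., for all y, x D y implies y = x); (b) if the operation ∧ is commutative on all of S, then the operation ∨ is also commutative on all of S, and conversely. -/
/-!
Absorption makes both operations idempotent and gives `x ∧ y = x ↔ x ∨ y = y` and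
`x ∧ y = y ↔ x ∨ y = x`. With these, `x ∧ y = y ∧ x` follows from `x ∨ (y ∧ x) = x` and
`(x ∧ y) ∨ x = x`, and dually `x ∨ y = y ∨ x` follows from `x ∧ (y ∨ x) = x` and
`(x ∨ y) ∧ x = x`. Each of the four elements `x ∧ (y ∨ x)`, `(x ∨ y) ∧ x`, `x ∨ (y ∧ x)`,
`(x ∧ y) ∨ x` is `D`-related to `x`, so a singleton `D`-class forces all four identities;
and if one operation is commutative, absorption yields the identities for the other.
-/

structure IsSkewLattice {S : Type*} (mt jn : S → S → S) : Prop where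
  mt_assoc : ∀ x y z : S, mt x (mt y z) = mt (mt x y) z
  jn_assoc : ∀ x y z : S, jn x (jn y z) = jn (jn x y) z
  jn_mt_self_right : ∀ x y : S, jn (mt y x) x = x
  mt_jn_self_left : ∀ x y : S, mt x (jn x y) = x
  mt_jn_self_right : ∀ x y : S, mt (jn y x) x = x
  jn_mt_self_left : ∀ x y : S, jn x (mt x y) = x

namespace IsSkewLattice

variable {S : Type*} {mt jn : S → S → S}

/-- Green's relation `D`. -/
def DRel (mt : S → S → S) (x y : S) : Prop :=
  mt (mt x y) x = x ∧ mt (mt y x) y = y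

variable (h : IsSkewLattice mt jn)
include h

theorem mt_self (x : S) : mt x x = x :=
  calc mt x x = mt x (jn x (mt x x)) := by rw [h.jn_mt_self_left]
    _ = x := h.mt_jn_self_left x _

theorem jn_self (x : S) : jn x x = x :=
  calc jn x x = jn x (mt x (jn x x)) := by rw [h.mt_jn_self_left]
    _ = x := h.jn_mt_self_left x _

theorem mt_eq_left_iff_jn_eq_right {x y : S} : mt x y = x ↔ jn x y = y where
  mp hxy := calc jn x y = jn (mt x y) y := by rw [hxy]
    _ = y := h.jn_mt_self_right y x
  mpr hxy := calc mt x y = mt x (jn x y) := by rw [hxy]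
    _ = x := h.mt_jn_self_left x y

theorem mt_eq_right_iff_jn_eq_left {x y : S} : mt x y = y ↔ jn x y = x where
  mp hxy := calc jn x y = jn x (mt x y) := by rw [hxy]
    _ = x := h.jn_mt_self_left x y
  mpr hxy := calc mt x y = mt (jn x y) y := by rw [hxy]
    _ = y := h.mt_jn_self_right y x

theorem mt_comm_of_jn_mt_eq {x y : S} (hyx : jn x (mt y x) = x) (hxy : jn (mt x y) x = x) :
    mt x y = mt y x :=
  calc mt x y = mt (mt x y) x := (h.mt_eq_left_iff_jn_eq_right.2 hxy).symm
    _ = mt x (mt y x) := (h.mt_assoc x y x).symm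
    _ = mt y x := h.mt_eq_right_iff_jn_eq_left.2 hyx

theorem jn_comm_of_mt_jn_eq {x y : S} (hyx : mt x (jn y x) = x) (hxy : mt (jn x y) x = x) :
    jn x y = jn y x :=
  calc jn x y = jn (jn x y) x := (h.mt_eq_right_iff_jn_eq_left.1 hxy).symm
    _ = jn x (jn y x) := (h.jn_assoc x y x).symm
    _ = jn y x := h.mt_eq_left_iff_jn_eq_right.1 hyx

theorem eq_of_dRel_of_mt_comm {x y : S} (hD : DRel mt x y) (hcomm : mt x y = mt y x) :
    y = x :=
  calc y = mt (mt x y) y := by rw [hcomm]; exact hD.2.symm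
    _ = mt x y := by rw [← h.mt_assoc, h.mt_self]
    _ = mt (mt y x) x := by rw [← h.mt_assoc, h.mt_self, hcomm]
    _ = x := by rw [← hcomm]; exact hD.1

omit h in
theorem dRel_of_mt_eq_right {x z : S} (hxz : mt x z = z) (hzx : mt z x = x) : DRel mt x z :=
  ⟨by rw [hxz, hzx], by rw [hzx, hxz]⟩

theorem dRel_of_mt_eq_left {x z : S} (hxz : mt x z = x) (hzx : mt z x = z) : DRel mt x z :=
  ⟨by rw [hxz, h.mt_self], by rw [hzx, h.mt_self]⟩

theorem dRel_mt_jn_left (x y : S) : DRel mt x (mt x (jn y x)) :=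
  dRel_of_mt_eq_right (by rw [h.mt_assoc, h.mt_self])
    (by rw [← h.mt_assoc, h.mt_jn_self_right, h.mt_self])

theorem dRel_mt_jn_right (x y : S) : DRel mt x (mt (jn x y) x) :=
  h.dRel_of_mt_eq_left (by rw [h.mt_assoc, h.mt_jn_self_left, h.mt_self])
    (by rw [← h.mt_assoc, h.mt_self])

theorem dRel_jn_mt_left (x y : S) : DRel mt x (jn x (mt y x)) :=
  h.dRel_of_mt_eq_left
    ((h.mt_eq_left_iff_jn_eq_right (x := x)).2 <| by rw [h.jn_assoc, h.jn_self])
    ((h.mt_eq_left_iff_jn_eq_right (y := x)).2 <| by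
      rw [← h.jn_assoc, h.jn_mt_self_right, h.jn_self])

theorem dRel_jn_mt_right (x y : S) : DRel mt x (jn (mt x y) x) :=
  dRel_of_mt_eq_right
    ((h.mt_eq_right_iff_jn_eq_left (x := x)).2 <| by
      rw [h.jn_assoc, h.jn_mt_self_left, h.jn_self])
    ((h.mt_eq_right_iff_jn_eq_left (y := x)).2 <| by rw [← h.jn_assoc, h.jn_self])

theorem central_iff_dRel_eq {x : S} :
    (∀ y, mt x y = mt y x ∧ jn x y = jn y x) ↔ ∀ y, DRel mt x y → y = x := by
  refine ⟨fun hc y hD => h.eq_of_dRel_of_mt_comm hD (hc y).1, fun hD y => ⟨?_, ?_⟩⟩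
  · exact h.mt_comm_of_jn_mt_eq (hD _ (h.dRel_jn_mt_left x y))
      (hD _ (h.dRel_jn_mt_right x y))
  · exact h.jn_comm_of_mt_jn_eq (hD _ (h.dRel_mt_jn_left x y))
      (hD _ (h.dRel_mt_jn_right x y))

theorem mt_comm_iff_jn_comm :
    (∀ x y : S, mt x y = mt y x) ↔ ∀ x y : S, jn x y = jn y x := by
  constructor
  · intro hmt x y
    exact h.jn_comm_of_mt_jn_eq (by rw [hmt]; exact h.mt_jn_self_right x y)
      (by rw [hmt]; exact h.mt_jn_self_left x y)
  · intro hjn x y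
    exact h.mt_comm_of_jn_mt_eq (by rw [hjn]; exact h.jn_mt_self_right x y)
      (by rw [hjn]; exact h.jn_mt_self_left x y)

end IsSkewLattice

/-- In a skew lattice S (with `mt` = ∧ and `jn` = ∨):
(a) an element x is central (commutes with every y under both operations) iff its D-class
is a singleton, where x D y iff x∧y∧x = x and y∧x∧y = y;
(b) ∧ is commutative on all of S iff ∨ is commutative on all of S. -/
theorem skew_lattice_center_and_commutativity
    {S : Type*} (mt jn : S → S → S)
    (mt_assoc : ∀ x y z : S, mt x (mt y z) = mt (mt x y) z)
    (jn_assoc : ∀ x y z : S, jn x (jn y z) = jn (jn x y) z)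
    (abs1 : ∀ x y : S, jn (mt y x) x = x)
    (abs2 : ∀ x y : S, mt x (jn x y) = x)
    (abs3 : ∀ x y : S, mt (jn y x) x = x)
    (abs4 : ∀ x y : S, jn x (mt x y) = x) :
    (∀ x : S,
      (∀ y : S, mt x y = mt y x ∧ jn x y = jn y x) ↔
      (∀ y : S, (mt (mt x y) x = x ∧ mt (mt y x) y = y) → y = x))
    ∧
    ((∀ x y : S, mt x y = mt y x) ↔ (∀ x y : S, jn x y = jn y x)) := by
  have hS : IsSkewLattice mt jn := ⟨mt_assoc, jn_assoc, abs1, abs2, abs3, abs4⟩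
  exact ⟨fun _ => hS.central_iff_dRel_eq, hS.mt_comm_iff_jn_comm⟩
end

section
/- In any skew lattice S, Green's relation D is a congruence with commutative quotient: if x D x' and y D y', then (x∧y) D (x'∧y') and (x∨y) D (x'∨y'); moreover, for all x,y, (x∧y) D (y∧x) and (x∨y) D (y∨x). -/
/-!
In a band (an associative idempotent operation) put `x ≤ y` when `x y x = x`. This is a preorder
whose associated equivalence is `D`, and `x y` is a greatest lower bound of `x` and `y`, so `D` is a
congruence and the quotient is a semilattice, in particular commutative. Both reducts `(S, ∧)` and
`(S, ∨)` of a skew lattice are bands, and absorption shows that the preorder of `∨` is the reverse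
of that of `∧`; hence the two reducts have the same `D`.
-/

/-- Green's relation D on a skew lattice (`mt` = ∧): x D y iff x∧y∧x = x and y∧x∧y = y. -/
def GreenD {S : Type*} (mt : S → S → S) (x y : S) : Prop :=
  mt (mt x y) x = x ∧ mt (mt y x) y = y

open Std

section Band

variable {S : Type*} (m : S → S → S)

/-- The `J`-preorder of a band: `x y x = x` holds iff `x ∈ S y S`. -/
def GreenJLe (x y : S) : Prop := m (m x y) x = x

variable {m} {x x' y y' z u v : S}

theorem GreenD.le (h : GreenD m x y) : GreenJLe m x y := h.1

theorem GreenD.ge (h : GreenD m x y) : GreenJLe m y x := h.2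

local infixl:70 " ⬝ " => m

variable [IdempotentOp m]

theorem greenJLe_of_mul_eq_left (h : x ⬝ y = x) : GreenJLe m x y := by
  rw [GreenJLe, h, IdempotentOp.idempotent (op := m)]

variable [Associative m]

theorem greenJLe_of_mul_eq_right (h : y ⬝ x = x) : GreenJLe m x y := by
  rw [GreenJLe, Associative.assoc (op := m), h, IdempotentOp.idempotent (op := m)]

theorem greenJLe_of_eq_mul_mul (h : x = u ⬝ y ⬝ v) : GreenJLe m x y := by
  subst h
  -- expand `y v` to `y v y v`, which creates the square of `u y v y`
  calc u ⬝ y ⬝ v ⬝ y ⬝ (u ⬝ y ⬝ v) = u ⬝ y ⬝ v ⬝ y ⬝ u ⬝ (y ⬝ v) := by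
        simp only [Associative.assoc]
    _ = u ⬝ y ⬝ v ⬝ y ⬝ u ⬝ (y ⬝ v ⬝ (y ⬝ v)) := by
        rw [IdempotentOp.idempotent (op := m) (y ⬝ v)]
    _ = (u ⬝ y ⬝ v ⬝ y) ⬝ (u ⬝ y ⬝ v ⬝ y) ⬝ v := by simp only [Associative.assoc]
    _ = u ⬝ (y ⬝ v ⬝ (y ⬝ v)) := by
        rw [IdempotentOp.idempotent (op := m)]; simp only [Associative.assoc]
    _ = u ⬝ y ⬝ v := by rw [IdempotentOp.idempotent (op := m), Associative.assoc (op := m)]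

theorem GreenJLe.trans (hxy : GreenJLe m x y) (hyz : GreenJLe m y z) : GreenJLe m x z :=
  greenJLe_of_eq_mul_mul (u := x ⬝ y) (v := y ⬝ x) <| by
    calc x = x ⬝ y ⬝ x := hxy.symm
      _ = x ⬝ (y ⬝ z ⬝ y) ⬝ x := by rw [hyz]
      _ = x ⬝ y ⬝ z ⬝ (y ⬝ x) := by simp only [Associative.assoc]

variable (x y) in
theorem greenJLe_mul_left : GreenJLe m (x ⬝ y) x :=
  greenJLe_of_eq_mul_mul (u := x) (v := y) (by rw [IdempotentOp.idempotent (op := m) x])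

variable (x y) in
theorem greenJLe_mul_right : GreenJLe m (x ⬝ y) y :=
  greenJLe_of_eq_mul_mul (u := x) (v := y) <| by
    rw [Associative.assoc (op := m), IdempotentOp.idempotent (op := m)]

theorem GreenJLe.mul (hy : GreenJLe m x y) (hz : GreenJLe m x z) : GreenJLe m x (y ⬝ z) := by
  unfold GreenJLe at *
  calc x ⬝ (y ⬝ z) ⬝ x = (x ⬝ z ⬝ x) ⬝ (y ⬝ z) ⬝ (x ⬝ y ⬝ x) := by rw [hz, hy]
    _ = x ⬝ (z ⬝ x ⬝ y ⬝ (z ⬝ x ⬝ y)) ⬝ x := by simp only [Associative.assoc]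
    _ = x ⬝ z ⬝ x ⬝ y ⬝ x := by
        rw [IdempotentOp.idempotent (op := m)]; simp only [Associative.assoc]
    _ = x := by rw [hz, hy]

theorem GreenJLe.mul_mul (hx : GreenJLe m x x') (hy : GreenJLe m y y') :
    GreenJLe m (x ⬝ y) (x' ⬝ y') :=
  ((greenJLe_mul_left x y).trans hx).mul ((greenJLe_mul_right x y).trans hy)

theorem GreenD.mul (hx : GreenD m x x') (hy : GreenD m y y') : GreenD m (x ⬝ y) (x' ⬝ y') :=
  ⟨hx.le.mul_mul hy.le, hx.ge.mul_mul hy.ge⟩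

variable (m x y) in
theorem greenD_mul_comm : GreenD m (x ⬝ y) (y ⬝ x) :=
  ⟨(greenJLe_mul_right x y).mul (greenJLe_mul_left x y),
    (greenJLe_mul_right y x).mul (greenJLe_mul_left y x)⟩

end Band

section SkewLattice

variable {S : Type*} {mt jn : S → S → S}

theorem idempotentOp_of_absorb (absorb : ∀ x y : S, mt x (jn x y) = x)
    (absorb' : ∀ x y : S, jn x (mt x y) = x) : IdempotentOp mt :=
  ⟨fun x => calc mt x x = mt x (jn x (mt x x)) := by rw [absorb']
    _ = x := absorb x _⟩

variable [Associative jn] [IdempotentOp jn]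
  (absorb_left : ∀ x y : S, jn (mt y x) x = x) (absorb_right : ∀ x y : S, jn x (mt x y) = x)
include absorb_left absorb_right

theorem GreenJLe.dual {x y : S} (h : GreenJLe mt x y) : GreenJLe jn y x := by
  have hx : jn (mt x y) x = mt x y := by
    calc jn (mt x y) x = jn (mt x y) (mt (mt x y) x) := by rw [h]
      _ = mt x y := absorb_right _ x
  exact (greenJLe_of_mul_eq_right (absorb_left y x)).trans (greenJLe_of_mul_eq_left hx)

theorem GreenD.dual {x y : S} (h : GreenD mt x y) : GreenD jn x y :=
  ⟨h.ge.dual absorb_left absorb_right, h.le.dual absorb_left absorb_right⟩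

end SkewLattice

/-- In any skew lattice, Green's relation D is a congruence with commutative quotient:
D is compatible with both ∧ and ∨, and (x∧y) D (y∧x) and (x∨y) D (y∨x) for all x, y. -/
theorem greenD_congruence_commutative_quotient
    {S : Type*} (mt jn : S → S → S)
    (mt_assoc : ∀ x y z : S, mt x (mt y z) = mt (mt x y) z)
    (jn_assoc : ∀ x y z : S, jn x (jn y z) = jn (jn x y) z)
    (abs1 : ∀ x y : S, jn (mt y x) x = x)
    (abs2 : ∀ x y : S, mt x (jn x y) = x)
    (abs3 : ∀ x y : S, mt (jn y x) x = x)
    (abs4 : ∀ x y : S, jn x (mt x y) = x) :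
    (∀ x x' y y' : S, GreenD mt x x' → GreenD mt y y' →
      GreenD mt (mt x y) (mt x' y') ∧ GreenD mt (jn x y) (jn x' y'))
    ∧
    (∀ x y : S, GreenD mt (mt x y) (mt y x) ∧ GreenD mt (jn x y) (jn y x)) := by
  have : Associative mt := ⟨fun x y z => (mt_assoc x y z).symm⟩
  have : Associative jn := ⟨fun x y z => (jn_assoc x y z).symm⟩
  have : IdempotentOp mt := idempotentOp_of_absorb abs2 abs4
  have : IdempotentOp jn := idempotentOp_of_absorb abs4 abs2
  have toJoin {x y : S} (h : GreenD mt x y) : GreenD jn x y := h.dual abs1 abs4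
  have toMeet {x y : S} (h : GreenD jn x y) : GreenD mt x y := h.dual abs3 abs2
  exact ⟨fun x x' y y' hx hy => ⟨hx.mul hy, toMeet ((toJoin hx).mul (toJoin hy))⟩,
    fun x y => ⟨greenD_mul_comm mt x y, toMeet (greenD_mul_comm jn x y)⟩⟩
end

section
/- In any skew lattice S, Green's relation D is the smallest congruence with commutative quotient: if θ is an equivalence relation on S that is compatible with both operations (x θ x' and y θ y' imply (x∧y) θ (x'∧y') and (x∨y) θ (x'∨y')) and satisfies (x∧y) θ (y∧x) for all x,y, then x D y implies x θ y. Hence S/D is the maximal lattice image of S. -/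
theorem mt_self_eq_of_absorption {S : Type*} (mt jn : S → S → S)
    (abs2 : ∀ x y : S, mt x (jn x y) = x) (abs4 : ∀ x y : S, jn x (mt x y) = x) (a : S) :
    mt a a = a := by
  simpa only [abs4] using abs2 a (mt a a)

theorem rel_mt_of_mt_mt_eq {S : Type*} {mt : S → S → S} {θ : S → S → Prop}
    (mt_assoc : ∀ x y z : S, mt x (mt y z) = mt (mt x y) z) (mt_idem : ∀ a : S, mt a a = a)
    (hcompat_left : ∀ x y y' : S, θ y y' → θ (mt x y) (mt x y'))
    (hcomm : ∀ x y : S, θ (mt x y) (mt y x)) {a b : S} (hab : mt (mt a b) a = a) :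
    θ a (mt a b) := by
  have h := hcompat_left a _ _ (hcomm b a)
  rwa [mt_assoc, hab, mt_assoc, mt_idem] at h

theorem greenD_smallest_commutative_congruence_general
    {S : Type*} (mt jn : S → S → S)
    (mt_assoc : ∀ x y z : S, mt x (mt y z) = mt (mt x y) z)
    (abs2 : ∀ x y : S, mt x (jn x y) = x)
    (abs4 : ∀ x y : S, jn x (mt x y) = x)
    (θ : S → S → Prop)
    (hequiv : Equivalence θ)
    (hcompat : ∀ x x' y y' : S, θ x x' → θ y y' →
      θ (mt x y) (mt x' y') ∧ θ (jn x y) (jn x' y'))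
    (hcomm : ∀ x y : S, θ (mt x y) (mt y x)) :
    ∀ x y : S, GreenD mt x y → θ x y := by
  rintro x y ⟨hx, hy⟩
  have key := @rel_mt_of_mt_mt_eq S mt θ mt_assoc (mt_self_eq_of_absorption mt jn abs2 abs4)
    (fun x _ _ h => (hcompat x x _ _ (hequiv.refl x) h).1) hcomm
  exact hequiv.trans (key hx) (hequiv.trans (hcomm x y) (hequiv.symm (key hy)))

/-- In any skew lattice, D is the smallest congruence with commutative quotient: every
equivalence relation θ compatible with both operations and satisfying (x∧y) θ (y∧x)
for all x, y contains D. (Hence S/D is the maximal lattice image of S.) -/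
theorem greenD_smallest_commutative_congruence
    {S : Type*} (mt jn : S → S → S)
    (mt_assoc : ∀ x y z : S, mt x (mt y z) = mt (mt x y) z)
    (jn_assoc : ∀ x y z : S, jn x (jn y z) = jn (jn x y) z)
    (abs1 : ∀ x y : S, jn (mt y x) x = x)
    (abs2 : ∀ x y : S, mt x (jn x y) = x)
    (abs3 : ∀ x y : S, mt (jn y x) x = x)
    (abs4 : ∀ x y : S, jn x (mt x y) = x)
    (θ : S → S → Prop)
    (hequiv : Equivalence θ)
    (hcompat : ∀ x x' y y' : S, θ x x' → θ y y' →
      θ (mt x y) (mt x' y') ∧ θ (jn x y) (jn x' y'))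
    (hcomm : ∀ x y : S, θ (mt x y) (mt y x)) :
    ∀ x y : S, GreenD mt x y → θ x y :=
  greenD_smallest_commutative_congruence_general mt jn mt_assoc abs2 abs4 θ hequiv hcompat hcomm
end

section
/- In any skew lattice, the Green's relations for the two band structures pair off: (a) x∧y = y and y∧x = x hold if and only if x∨y = x and y∨x = y (i.e., R on (S,∧) equals L on (S,∨)); (b) x∧y = x and y∧x = y hold if and only if x∨y = y and y∨x = x (i.e., L on (S,∧) equals R on (S,∨)); consequently (c) x∧y∧x = x and y∧x∧y = y hold if and only if x∨y∨x = x and y∨x∨y = y (i.e., D on (S,∧) equals D on (S,∨)). -/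
/-!
The absorption laws turn `x ∧ y = y` into `x ∨ y = x` and back, so the one-sided Green
relations of `∧` are the opposite one-sided relations of `∨`. For `D` one uses that in a band
`x D y` factors as `x L (y x) R y`, and conversely `x R b L y` forces `x D y`; translating the
factorisation through `∧`-`L` = `∨`-`R` and `∧`-`R` = `∨`-`L` moves `D` from one band to the other.
-/

namespace SkewLattice

variable {S : Type*}

/- In a band these equational forms are equivalent to Green's relations: `x R y` iff
`xS = yS`, `x L y` iff `Sx = Sy`, and `D = L ∘ R`. -/
def GreenR (f : S → S → S) (x y : S) : Prop := f x y = y ∧ f y x = x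

def GreenL (f : S → S → S) (x y : S) : Prop := f x y = x ∧ f y x = y

def GreenD (f : S → S → S) (x y : S) : Prop := f (f x y) x = x ∧ f (f y x) y = y

theorem idempotent_of_absorb {f g : S → S → S} (hfg : ∀ x y, f x (g x y) = x)
    (hgf : ∀ x y, g x (f x y) = x) (x : S) : f x x = x := by
  simpa only [hgf] using hfg x (f x x)

theorem greenR_iff_greenL_of_absorb {f g : S → S → S} (hgf : ∀ x y, g x (f x y) = x)
    (hfg : ∀ x y, f (g y x) x = x) (x y : S) : GreenR f x y ↔ GreenL g x y := by
  constructor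
  · rintro ⟨hxy, hyx⟩
    exact ⟨hxy ▸ hgf x y, hyx ▸ hgf y x⟩
  · rintro ⟨hxy, hyx⟩
    exact ⟨hxy ▸ hfg y x, hyx ▸ hfg x y⟩

theorem greenL_iff_greenR_of_absorb {f g : S → S → S} (hgf : ∀ x y, g (f y x) x = x)
    (hfg : ∀ x y, f x (g x y) = x) (x y : S) : GreenL f x y ↔ GreenR g x y := by
  constructor
  · rintro ⟨hxy, hyx⟩
    exact ⟨hxy ▸ hgf y x, hyx ▸ hgf x y⟩
  · rintro ⟨hxy, hyx⟩
    exact ⟨hxy ▸ hfg x y, hyx ▸ hfg y x⟩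

section Band

variable {f : S → S → S} [Std.Associative f] [Std.IdempotentOp f]

open Std.Associative (assoc)
open Std.IdempotentOp (idempotent)

theorem greenD_of_greenR_of_greenL {a b c : S} (hab : GreenR f a b) (hbc : GreenL f b c) :
    GreenD f a c := by
  obtain ⟨hab, hba⟩ := hab
  obtain ⟨hbc, hcb⟩ := hbc
  have hb_ca : f b (f c a) = a := by rw [← assoc (op := f), hbc, hba]
  have hca_b : f (f c a) b = c := by rw [assoc (op := f), hab, hcb]
  constructor
  · calc f (f a c) a = f (f b (f c a)) (f c a) := by rw [hb_ca, assoc (op := f)]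
      _ = a := by rw [assoc (op := f), idempotent (op := f), hb_ca]
  · calc f (f c a) c = f (f c a) (f (f c a) b) := by rw [hca_b]
      _ = c := by rw [← assoc (op := f), idempotent (op := f), hca_b]

theorem greenL_greenR_of_greenD {x y : S} (h : GreenD f x y) :
    GreenL f x (f y x) ∧ GreenR f (f y x) y := by
  refine ⟨⟨?_, ?_⟩, ⟨h.2, ?_⟩⟩
  · rw [← assoc (op := f), h.1]
  · rw [assoc (op := f), idempotent (op := f)]
  · rw [← assoc (op := f), idempotent (op := f)]

end Band

theorem GreenD.of_greenR_greenL_swap {f g : S → S → S} [Std.Associative f] [Std.IdempotentOp f]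
    [Std.Associative g] [Std.IdempotentOp g] (hR : ∀ x y, GreenR f x y → GreenL g x y)
    (hL : ∀ x y, GreenL f x y → GreenR g x y) {x y : S} (h : GreenD f x y) : GreenD g x y :=
  have ⟨hxb, hby⟩ := greenL_greenR_of_greenD h
  greenD_of_greenR_of_greenL (hL _ _ hxb) (hR _ _ hby)

end SkewLattice

open SkewLattice in
/-- In any skew lattice the Green's relations of the two band structures pair off:
(a) R on (S,∧) equals L on (S,∨); (b) L on (S,∧) equals R on (S,∨);
(c) D on (S,∧) equals D on (S,∨). Here `mt` is ∧ and `jn` is ∨. -/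
theorem skew_lattice_green_relations_pair_off
    {S : Type*} (mt jn : S → S → S)
    (mt_assoc : ∀ x y z : S, mt x (mt y z) = mt (mt x y) z)
    (jn_assoc : ∀ x y z : S, jn x (jn y z) = jn (jn x y) z)
    (abs1 : ∀ x y : S, jn (mt y x) x = x)
    (abs2 : ∀ x y : S, mt x (jn x y) = x)
    (abs3 : ∀ x y : S, mt (jn y x) x = x)
    (abs4 : ∀ x y : S, jn x (mt x y) = x) :
    ∀ x y : S,
      ((mt x y = y ∧ mt y x = x) ↔ (jn x y = x ∧ jn y x = y)) ∧
      ((mt x y = x ∧ mt y x = y) ↔ (jn x y = y ∧ jn y x = x)) ∧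
      ((mt (mt x y) x = x ∧ mt (mt y x) y = y) ↔
        (jn (jn x y) x = x ∧ jn (jn y x) y = y)) := by
  have : Std.Associative mt := ⟨fun x y z => (mt_assoc x y z).symm⟩
  have : Std.Associative jn := ⟨fun x y z => (jn_assoc x y z).symm⟩
  have : Std.IdempotentOp mt := ⟨idempotent_of_absorb abs2 abs4⟩
  have : Std.IdempotentOp jn := ⟨idempotent_of_absorb abs4 abs2⟩
  have hR := greenR_iff_greenL_of_absorb abs4 abs3
  have hL := greenL_iff_greenR_of_absorb abs1 abs2
  intro x y
  exact ⟨hR x y, hL x y,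
    GreenD.of_greenR_greenL_swap (fun x y => (hR x y).1) (fun x y => (hL x y).1),
    GreenD.of_greenR_greenL_swap (fun x y => (hL x y).2) (fun x y => (hR x y).2)⟩
end
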